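/- arXiv:0910.3443 — 2 statements merged into one kernel-verified Lean document; each statement's English description precedes it below -/
import Mathlib

section
/- Let H be a real homogeneous trigonometric polynomial of degree 3 in (sin θ, cos θ), i.e. H(θ) = A·∏_{j=1}^{3} sin(θ − θⱼ) with A real and θⱼ ∈ ℂ (complex roots occurring in conjugate pairs so H is real-valued on ℝ). If θ ∈ ℝ is at distance at least α (0 < α ≤ π/2) in ℂ from every complex root θⱼ + πn (n ∈ ℤ), then |H(θ)| ≥ (α³/24)·‖H‖₂, where ‖H‖₂² = ∫₀^{2π} H(φ)² dφ. -/
/-!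
For real `φ`, `‖sin (φ - θⱼ)‖² = sin² (φ - Re θⱼ) + sinh² (Im θⱼ) ≤ cosh² (Im θⱼ)`, so
`|H| ≤ M := |A| ∏ cosh (Im θⱼ)` on `ℝ` and `‖H‖₂ ≤ √(2π) M ≤ 3 M`. Conversely, if `z` is at
distance `≥ α` from `πℤ`, Jordan's inequality near the nearest zero of `sin` and `|sinh y| ≥ |y|`
give `‖sin z‖ ≥ (α / 2) cosh (Im z)`; hence `|H θ| ≥ (α / 2)³ M = (α³ / 24) · 3 M`.
-/

open Real

theorem Real.exists_abs_sub_int_mul_pi_le (x : ℝ) : ∃ n : ℤ, |x - n * π| ≤ π / 2 := by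
  refine ⟨round (x / π), ?_⟩
  have h := abs_sub_round (x / π)
  rw [show x - round (x / π) * π = (x / π - round (x / π)) * π by field_simp, abs_mul,
    abs_of_pos pi_pos]
  linarith [mul_le_mul_of_nonneg_right h pi_pos.le]

theorem Real.abs_sub_int_mul_pi_div_two_le_abs_sin {x : ℝ} {n : ℤ} (h : |x - n * π| ≤ π / 2) :
    |x - n * π| / 2 ≤ |sin x| := by
  have hJordan := mul_abs_le_abs_sin h
  rw [sin_sub_int_mul_pi, abs_mul, abs_neg_one_zpow, one_mul] at hJordan
  calc |x - n * π| / 2 ≤ 2 / π * |x - n * π| := by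
        rw [div_mul_eq_mul_div, le_div_iff₀ pi_pos]
        nlinarith [abs_nonneg (x - n * π), pi_le_four]
    _ ≤ |sin x| := hJordan

theorem Real.sq_le_sinh_sq (y : ℝ) : y ^ 2 ≤ sinh y ^ 2 := by
  rw [← sq_abs y, ← sq_abs (sinh y), abs_sinh]
  exact pow_le_pow_left₀ (abs_nonneg y) (self_le_sinh_iff.2 (abs_nonneg y)) 2

theorem Complex.norm_sin_sq (z : ℂ) : ‖sin z‖ ^ 2 = Real.sin z.re ^ 2 + Real.sinh z.im ^ 2 := by
  rw [← re_add_im z, sin_add, cos_mul_I, sin_mul_I, Complex.sq_norm, normSq_apply]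
  simp only [add_re, mul_re, sin_ofReal_re, cosh_ofReal_re, sin_ofReal_im, cosh_ofReal_im,
    mul_zero, sub_zero, cos_ofReal_re, sinh_ofReal_re, I_re, sinh_ofReal_im, I_im, mul_one,
    sub_self, cos_ofReal_im, mul_im, add_zero, zero_mul, add_im, zero_add, re_add_im]
  nlinarith [Real.sin_sq_add_cos_sq z.re, Real.cosh_sq' z.im]

theorem Complex.norm_sin_le_cosh_im (z : ℂ) : ‖sin z‖ ≤ Real.cosh z.im := by
  refine (pow_le_pow_iff_left₀ (norm_nonneg _) (Real.cosh_pos _).le two_ne_zero).1 ?_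
  rw [norm_sin_sq, Real.cosh_sq']
  linarith [Real.sin_sq_le_one z.re]

theorem Complex.half_mul_cosh_im_le_norm_sin {α : ℝ} (hα : 0 ≤ α) (hαπ : α ≤ π / 2) {z : ℂ}
    (hz : ∀ n : ℤ, α ≤ ‖z - π * n‖) : α / 2 * Real.cosh z.im ≤ ‖sin z‖ := by
  obtain ⟨n, hn⟩ := Real.exists_abs_sub_int_mul_pi_le z.re
  set r := z.re - n * π
  have hsin : r ^ 2 / 4 ≤ Real.sin z.re ^ 2 := by
    have h := sq_le_sq' (by linarith [abs_nonneg r, abs_nonneg (Real.sin z.re)])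
      (Real.abs_sub_int_mul_pi_div_two_le_abs_sin hn)
    rw [div_pow, sq_abs, sq_abs] at h
    linarith
  have hdist : α ^ 2 ≤ r ^ 2 + z.im ^ 2 := by
    have h := pow_le_pow_left₀ hα (hz n) 2
    rw [Complex.sq_norm, normSq_apply] at h
    simp only [sub_re, sub_im, mul_re, mul_im, ofReal_re, ofReal_im, intCast_re,
      intCast_im] at h
    nlinarith [h]
  have hα3 : α ^ 2 ≤ 3 := by nlinarith [pi_lt_d2, pi_pos]
  have hsinh := Real.sq_le_sinh_sq z.im
  refine (pow_le_pow_iff_left₀ (by positivity) (norm_nonneg _) two_ne_zero).1 ?_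
  rw [norm_sin_sq, mul_pow, Real.cosh_sq']
  -- `α² ≤ 3` keeps the coefficient `1 - α² / 4` of `sinh² (Im z)` at least `1 / 4`.
  nlinarith [mul_le_mul_of_nonneg_left hsinh (by linarith : (0 : ℝ) ≤ 3 - α ^ 2)]

theorem sqrt_intervalIntegral_sq_le {f : ℝ → ℝ} {M : ℝ} (hf : ∀ x, |f x| ≤ M) (a b : ℝ) :
    √(∫ x in a..b, f x ^ 2) ≤ √|b - a| * M := by
  have hM : 0 ≤ M := (abs_nonneg _).trans (hf 0)
  have hsq (x : ℝ) : ‖f x ^ 2‖ ≤ M ^ 2 := by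
    rw [Real.norm_eq_abs, abs_pow]
    exact pow_le_pow_left₀ (abs_nonneg _) (hf x) 2
  have hint : ∫ x in a..b, f x ^ 2 ≤ M ^ 2 * |b - a| :=
    (le_abs_self _).trans (intervalIntegral.norm_integral_le_of_norm_le_const fun x _ => hsq x)
  calc √(∫ x in a..b, f x ^ 2) ≤ √(M ^ 2 * |b - a|) := sqrt_le_sqrt hint
    _ = √|b - a| * M := by rw [sqrt_mul (sq_nonneg M), sqrt_sq hM, mul_comm]

section SinProduct

variable {ι : Type*} [Fintype ι] (t : ι → ℂ)

theorem prod_norm_sin_sub_le (φ : ℝ) :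
    ∏ j, ‖Complex.sin (φ - t j)‖ ≤ ∏ j, cosh (t j).im :=
  Finset.prod_le_prod (fun _ _ => norm_nonneg _) fun j _ => by
    simpa using Complex.norm_sin_le_cosh_im (φ - t j)

theorem half_pow_mul_prod_cosh_le_prod_norm_sin_sub {α : ℝ} (hα : 0 ≤ α) (hαπ : α ≤ π / 2)
    {θ : ℝ} (hθ : ∀ j, ∀ n : ℤ, α ≤ ‖(θ : ℂ) - t j - π * n‖) :
    (α / 2) ^ Fintype.card ι * ∏ j, cosh (t j).im ≤ ∏ j, ‖Complex.sin (θ - t j)‖ := by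
  rw [← Finset.card_univ, ← Finset.prod_const, ← Finset.prod_mul_distrib]
  exact Finset.prod_le_prod (fun _ _ => by positivity) fun j _ => by
    simpa using Complex.half_mul_cosh_im_le_norm_sin hα hαπ (hθ j)

end SinProduct

/-- Lemma on homogeneous trigonometric polynomials of degree 3: if
`H(θ) = A·∏ⱼ sin(θ−θⱼ)` (`A` real, `θⱼ ∈ ℂ`) is real-valued on `ℝ`, and the real
point `θ` is at distance at least `α` (`0 < α ≤ π/2`) in `ℂ` from every complex
root `θⱼ + πn`, then `|H(θ)| ≥ (α³/24)·‖H‖₂` where `‖H‖₂² = ∫₀^{2π} H(φ)² dφ`. -/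
theorem stmt4 (A α θ : ℝ) (t : Fin 3 → ℂ) (H : ℝ → ℝ)
    (hH : ∀ φ : ℝ, (H φ : ℂ) = (A : ℂ) * ∏ j : Fin 3, Complex.sin ((φ : ℂ) - t j))
    (hα : 0 < α) (hαπ : α ≤ π / 2)
    (hdist : ∀ j : Fin 3, ∀ n : ℤ, ‖(θ : ℂ) - t j - (π : ℂ) * n‖ ≥ α) :
    |H θ| ≥ (α ^ 3 / 24) * Real.sqrt (∫ φ in (0 : ℝ)..(2 * π), (H φ) ^ 2) := by
  set M := |A| * ∏ j, cosh (t j).im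
  have habs (φ : ℝ) : |H φ| = |A| * ∏ j, ‖Complex.sin (φ - t j)‖ := by
    simpa [norm_prod] using congrArg norm (hH φ)
  have hupper (φ : ℝ) : |H φ| ≤ M := by
    rw [habs]
    exact mul_le_mul_of_nonneg_left (prod_norm_sin_sub_le t φ) (abs_nonneg A)
  have hlower : (α / 2) ^ 3 * M ≤ |H θ| := by
    rw [habs, mul_left_comm]
    exact mul_le_mul_of_nonneg_left
      (half_pow_mul_prod_cosh_le_prod_norm_sin_sub t hα.le hαπ hdist) (abs_nonneg A)
  have hL2 := sqrt_intervalIntegral_sq_le hupper 0 (2 * π)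
  have hsqrt : √|2 * π - 0| ≤ 3 := by
    rw [sqrt_le_left (by norm_num), sub_zero, abs_of_pos two_pi_pos]
    linarith [pi_le_four]
  have hM : 0 ≤ M := (abs_nonneg _).trans (hupper 0)
  calc α ^ 3 / 24 * √(∫ φ in (0 : ℝ)..(2 * π), H φ ^ 2) ≤ α ^ 3 / 24 * (3 * M) := by
        gcongr
        exact hL2.trans (mul_le_mul_of_nonneg_right hsqrt hM)
    _ = (α / 2) ^ 3 * M := by ring
    _ ≤ |H θ| := hlower
end

section
/- If two points p, q of the plane ℝ² lie in the disc of radius 1/δ around the origin (with 0 < δ < 1), neither equal to the origin, and their Euclidean distance is at least δ, then their distance in polar coordinates, measured as √((r_p − r_q)² + (θ_p − θ_q)²) with angles chosen so |θ_p − θ_q| ≤ π, is at least δ². -/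
open Real

/-! The Euclidean distance of two points in polar form satisfies the law of cosines
`|p - q|² = (r_p - r_q)² + 2 r_p r_q (1 - cos (θ_p - θ_q))`, and `1 - cos t ≤ t² / 2` turns this into
`|p - q|² ≤ (r_p - r_q)² + r_p r_q (θ_p - θ_q)²`. In the disc of radius `1/δ` the weight `r_p r_q`
is at most `1/δ²`, so `δ² ≤ |p - q|² ≤ ((r_p - r_q)² + (θ_p - θ_q)²) / δ²`. -/

namespace Complex

theorem norm_ofReal_mul_exp_sub_sq (r s θ φ : ℝ) :
    ‖(r : ℂ) * exp (θ * I) - s * exp (φ * I)‖ ^ 2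
      = (r - s) ^ 2 + 2 * r * s * (1 - Real.cos (θ - φ)) := by
  rw [← normSq_eq_norm_sq, exp_mul_I, exp_mul_I, normSq_apply]
  simp only [sub_re, mul_re, ofReal_re, add_re, cos_ofReal_re, sin_ofReal_re, I_re, mul_zero,
    sin_ofReal_im, I_im, mul_one, sub_self, add_zero, ofReal_im, add_im, cos_ofReal_im, mul_im,
    zero_add, zero_mul, sub_zero, sub_im, Real.cos_sub]
  linear_combination r ^ 2 * Real.sin_sq_add_cos_sq θ + s ^ 2 * Real.sin_sq_add_cos_sq φ

theorem norm_sub_sq_le_of_polar {p q : ℂ} {θp θq : ℝ}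
    (hθp : p = (‖p‖ : ℂ) * exp (θp * I)) (hθq : q = (‖q‖ : ℂ) * exp (θq * I)) :
    ‖p - q‖ ^ 2 ≤ (‖p‖ - ‖q‖) ^ 2 + ‖p‖ * ‖q‖ * (θp - θq) ^ 2 := by
  have hcos := norm_ofReal_mul_exp_sub_sq ‖p‖ ‖q‖ θp θq
  rw [← hθp, ← hθq] at hcos
  rw [hcos]
  nlinarith [Real.one_sub_sq_div_two_le_cos (x := θp - θq), mul_nonneg (norm_nonneg p) (norm_nonneg q)]

end Complex

theorem stmt13_general (δ : ℝ) (hδ0 : 0 < δ) (hδ1 : δ < 1) (p q : ℂ)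
    (hpd : ‖p‖ ≤ 1 / δ) (hqd : ‖q‖ ≤ 1 / δ)
    (hdist : ‖p - q‖ ≥ δ)
    (θp θq : ℝ)
    (hθp : p = (‖p‖ : ℂ) * Complex.exp (θp * Complex.I))
    (hθq : q = (‖q‖ : ℂ) * Complex.exp (θq * Complex.I)) :
    Real.sqrt ((‖p‖ - ‖q‖) ^ 2 + (θp - θq) ^ 2) ≥ δ ^ 2 := by
  have hweight : δ ^ 2 * (‖p‖ * ‖q‖) ≤ 1 := by
    have hδp : δ * ‖p‖ ≤ 1 := by rwa [le_div_iff₀' hδ0] at hpd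
    have hδq : δ * ‖q‖ ≤ 1 := by rwa [le_div_iff₀' hδ0] at hqd
    calc δ ^ 2 * (‖p‖ * ‖q‖) = (δ * ‖p‖) * (δ * ‖q‖) := by ring
      _ ≤ 1 := mul_le_one₀ hδp (by positivity) hδq
  have hδsq : δ ^ 2 ≤ 1 := pow_le_one₀ hδ0.le hδ1.le
  have key : (δ ^ 2) ^ 2 ≤ (‖p‖ - ‖q‖) ^ 2 + (θp - θq) ^ 2 :=
    calc (δ ^ 2) ^ 2 ≤ δ ^ 2 * ‖p - q‖ ^ 2 := by
          rw [sq (δ ^ 2)]; gcongr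
      _ ≤ δ ^ 2 * ((‖p‖ - ‖q‖) ^ 2 + ‖p‖ * ‖q‖ * (θp - θq) ^ 2) := by
          gcongr; exact Complex.norm_sub_sq_le_of_polar hθp hθq
      _ = δ ^ 2 * (‖p‖ - ‖q‖) ^ 2 + δ ^ 2 * (‖p‖ * ‖q‖) * (θp - θq) ^ 2 := by ring
      _ ≤ (‖p‖ - ‖q‖) ^ 2 + (θp - θq) ^ 2 := by
          gcongr <;> exact mul_le_of_le_one_left (sq_nonneg _) ‹_›
  exact Real.le_sqrt_of_sq_le key

/-- If two nonzero points of the plane lie in the disc of radius `1/δ` (`0 < δ < 1`)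
and are at Euclidean distance at least `δ`, then in polar coordinates (with angle
representatives chosen so that `|θ_p − θ_q| ≤ π`) their distance
`√((r_p − r_q)² + (θ_p − θ_q)²)` is at least `δ²`. -/
theorem stmt13 (δ : ℝ) (hδ0 : 0 < δ) (hδ1 : δ < 1) (p q : ℂ)
    (hp : p ≠ 0) (hq : q ≠ 0)
    (hpd : ‖p‖ ≤ 1 / δ) (hqd : ‖q‖ ≤ 1 / δ)
    (hdist : ‖p - q‖ ≥ δ)
    (θp θq : ℝ)
    (hθp : p = (‖p‖ : ℂ) * Complex.exp (θp * Complex.I))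
    (hθq : q = (‖q‖ : ℂ) * Complex.exp (θq * Complex.I))
    (hθ : |θp - θq| ≤ π) :
    Real.sqrt ((‖p‖ - ‖q‖) ^ 2 + (θp - θq) ^ 2) ≥ δ ^ 2 :=
  stmt13_general δ hδ0 hδ1 p q hpd hqd hdist θp θq hθp hθq
end
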